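/- Let P be an M×M real matrix with eᵀP = eᵀ (a column-stochastic transition matrix of a discrete-time Markov chain), set A = P − I_M, and suppose J A H is invertible. Then p_∞ = (I_M − H (J A H)^{-1} J A) e_M satisfies P p_∞ = p_∞ and eᵀ p_∞ = 1; i.e., the same explicit formula with A = P − I gives the stationary distribution of the discrete-time chain. -/

import Mathlib

open Matrix

/-- The all-but-last-row identity matrix `J` (size `(M-1) × M`). -/
noncomputable def J (M : ℕ) : Matrix (Fin (M - 1)) (Fin M) ℝ :=
  Matrix.of fun i j => if (i : ℕ) = (j : ℕ) then 1 else 0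

/-- The matrix `H` (size `M × (M-1)`): identity on top, last row all `-1`. -/
noncomputable def H (M : ℕ) : Matrix (Fin M) (Fin (M - 1)) ℝ :=
  Matrix.of fun i j => if (i : ℕ) = (j : ℕ) then 1 else if (i : ℕ) = M - 1 then -1 else 0

/-- The all-ones vector `e = (1,...,1)ᵀ`. -/
noncomputable def eVec (M : ℕ) : Fin M → ℝ := fun _ => 1

/-- The unit vector `e_M = (0,...,0,1)ᵀ`. -/
noncomputable def eM (M : ℕ) : Fin M → ℝ := fun i => if (i : ℕ) = M - 1 then 1 else 0

/-!
The column sums of `A = P - I` vanish and `H J = I - e_M eᵀ`, so `H J A = A`: the last row of `A`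
is minus the sum of the others. Hence `A H = H (J A H)`, which gives `A H (J A H)⁻¹ J A = H J A = A`,
i.e. `A (I - H (J A H)⁻¹ J A) = 0`, and every column of `I - H (J A H)⁻¹ J A` is fixed by `P`.
Since `J H = I`, also `eᵀ H = eᵀ H J H = 0`, so `eᵀ p_∞ = eᵀ e_M = 1`.
-/

theorem mul_one_sub_mul_nonsing_inv_mul_eq_zero {R m n : Type*} [CommRing R]
    [Fintype m] [DecidableEq m] [Fintype n] [DecidableEq n]
    {A : Matrix n n R} {J : Matrix m n R} {H : Matrix n m R}
    (hA : H * (J * A) = A) (hB : IsUnit (J * A * H)) :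
    A * (1 - H * (J * A * H)⁻¹ * (J * A)) = 0 := by
  have hAH : A * H = H * (J * A * H) := by
    conv_lhs => rw [← hA]
    simp only [Matrix.mul_assoc]
  rw [mul_sub, mul_one, ← Matrix.mul_assoc A, ← Matrix.mul_assoc A, hAH,
    mul_nonsing_inv_cancel_right _ H ((isUnit_iff_isUnit_det _).mp hB), hA, sub_self]

theorem J_mul_H (M : ℕ) : J M * H M = 1 := by
  ext i j
  simp only [mul_apply, _root_.J, H, of_apply, one_apply, Fin.ext_iff]
  -- the summand depends on `k` only through `(k : ℕ)`, so the sum can be taken over `range`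
  rw [Fin.sum_univ_eq_sum_range (fun k : ℕ => (if (i : ℕ) = k then (1 : ℝ) else 0) *
    (if k = (j : ℕ) then 1 else if k = M - 1 then -1 else 0))]
  simp only [ite_mul, one_mul, zero_mul, Finset.sum_ite_eq, Finset.mem_range]
  have := i.isLt
  split_ifs <;> first | rfl | omega

theorem H_mul_J (M : ℕ) : H M * J M = 1 - vecMulVec (eM M) (eVec M) := by
  ext i j
  simp only [mul_apply, _root_.J, H, of_apply, one_apply, Fin.ext_iff, Matrix.sub_apply,
    vecMulVec_apply, eM, eVec]
  rw [Fin.sum_univ_eq_sum_range (fun k : ℕ =>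
    (if (i : ℕ) = k then (1 : ℝ) else if (i : ℕ) = M - 1 then -1 else 0) *
      (if k = (j : ℕ) then 1 else 0))]
  simp only [mul_ite, mul_one, mul_zero, Finset.sum_ite_eq', Finset.mem_range]
  have := i.isLt
  have := j.isLt
  split_ifs <;> first | omega | norm_num

theorem eVec_dotProduct_eM {M : ℕ} (hM : 0 < M) : eVec M ⬝ᵥ eM M = 1 := by
  obtain ⟨m, rfl⟩ : ∃ m, M = m + 1 := ⟨M - 1, by omega⟩
  rw [dotProduct, Fin.sum_univ_castSucc]
  simp [eVec, eM, Fin.is_lt, Nat.ne_of_lt]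

theorem H_mul_J_mul_of_eVec_vecMul_eq_zero {M : ℕ} {A : Matrix (Fin M) (Fin M) ℝ}
    (hA : eVec M ᵥ* A = 0) : H M * (J M * A) = A := by
  rw [← Matrix.mul_assoc, H_mul_J, sub_mul, one_mul, vecMulVec_mul, hA, vecMulVec_zero, sub_zero]

theorem eVec_vecMul_H {M : ℕ} (hM : 0 < M) : eVec M ᵥ* H M = 0 :=
  calc eVec M ᵥ* H M = (eVec M ᵥ* (H M * J M)) ᵥ* H M := by
        rw [vecMul_vecMul, Matrix.mul_assoc, J_mul_H, Matrix.mul_one]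
    _ = 0 := by
        rw [H_mul_J, vecMul_sub, vecMul_one, vecMul_vecMulVec, eVec_dotProduct_eM hM, one_smul,
          sub_self, zero_vecMul]

theorem stmt13 (M : ℕ) (hM : 2 ≤ M) (P : Matrix (Fin M) (Fin M) ℝ)
    (hP : eVec M ᵥ* P = eVec M)
    (hinv : IsUnit (J M * (P - 1) * H M)) :
    P *ᵥ ((1 - H M * (J M * (P - 1) * H M)⁻¹ * (J M * (P - 1))) *ᵥ eM M) =
      (1 - H M * (J M * (P - 1) * H M)⁻¹ * (J M * (P - 1))) *ᵥ eM M ∧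
    eVec M ⬝ᵥ ((1 - H M * (J M * (P - 1) * H M)⁻¹ * (J M * (P - 1))) *ᵥ eM M) = 1 := by
  have hM₀ : 0 < M := by omega
  set X := 1 - H M * (J M * (P - 1) * H M)⁻¹ * (J M * (P - 1))
  have hcol : eVec M ᵥ* (P - 1) = 0 := by rw [vecMul_sub, vecMul_one, hP, sub_self]
  have hPX : P * X = X := by
    rw [← sub_eq_zero, ← sub_one_mul]
    exact mul_one_sub_mul_nonsing_inv_mul_eq_zero (H_mul_J_mul_of_eVec_vecMul_eq_zero hcol) hinv
  have heX : eVec M ᵥ* X = eVec M := by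
    rw [vecMul_sub, vecMul_one, Matrix.mul_assoc, ← vecMul_vecMul, eVec_vecMul_H hM₀, zero_vecMul,
      sub_zero]
  exact ⟨by rw [mulVec_mulVec, hPX], by rw [dotProduct_mulVec, heX, eVec_dotProduct_eM hM₀]⟩
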